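/- In the Pöppe algebra of compositions, the product of the order-one signature expansion with itself is $\widehat{\underline{1}} * \widehat{\underline{1}} = 21 + 12 + 2\cdot 111$, and consequently the single-letter composition $3$ satisfies $3 = \widehat{\underline{3}} - 3\cdot(\widehat{\underline{1}} * \widehat{\underline{1}})$, where $\widehat{\underline{3}} = 3 + 3\cdot 21 + 3\cdot 12 + 6\cdot 111$. This is the combinatorial-algebra statement of integrability of the (potential) Korteweg–de Vries equation. -/

import Mathlib

open Finset

/-- The set of compositions of `n` (lists of positive integers summing to `n`). -/
def comps : ℕ → Finset (List ℕ+)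
  | 0 => {[]}
  | n + 1 =>
    (Finset.range (n + 1)).attach.biUnion fun k =>
      (comps k.1).image fun l =>
        (⟨n + 1 - k.1, Nat.sub_pos_of_lt (Finset.mem_range.mp k.2)⟩ : ℕ+) :: l
  decreasing_by exact Finset.mem_range.mp k.2

/-- Signature character of a composition. -/
def chi : List ℕ+ → ℕ
  | [] => 1
  | a :: t => Nat.choose ((a : ℕ) + (t.map fun x => (x : ℕ)).sum) (a : ℕ) * chi t

/-- The Pöppe product of two basis compositions `u a` and `b v`:
`(u a) * (b v) = u(a+1)bv + ua(b+1)v + 2·(ua1bv)`, as an element of the free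
vector space on compositions (zero if either composition is empty). -/
noncomputable def ppWord (u v : List ℕ+) : List ℕ+ →₀ ℝ :=
  match u.reverse, v with
  | a :: ur, b :: v' =>
      Finsupp.single (((a + 1) :: ur).reverse ++ b :: v') 1
      + Finsupp.single ((a :: ur).reverse ++ (b + 1) :: v') 1
      + (2 : ℝ) • Finsupp.single ((a :: ur).reverse ++ (1 : ℕ+) :: b :: v') 1
  | _, _ => 0

/-- The bilinear Pöppe product on the free vector space on compositions. -/
noncomputable def poppeMul (x y : List ℕ+ →₀ ℝ) : List ℕ+ →₀ ℝ :=
  x.sum fun u cu => y.sum fun v cv => (cu * cv) • ppWord u v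

/-- The signature expansion of order `n`: `∑_{w ⊨ n} χ(w)·w`. -/
noncomputable def sigExp (n : ℕ) : List ℕ+ →₀ ℝ :=
  ∑ w ∈ comps n, (chi w : ℝ) • Finsupp.single w 1

/-- The derivation of a single composition: the sum of all single-letter increments
plus the sum of all insertions of a letter `1` into the gaps. -/
noncomputable def derWord (w : List ℕ+) : List ℕ+ →₀ ℝ :=
  (∑ k ∈ Finset.range w.length,
      Finsupp.single (w.take k ++ (w.getD k 1 + 1) :: w.drop (k + 1)) (1 : ℝ))
  + ∑ k ∈ Finset.range (w.length + 1),
      Finsupp.single (w.take k ++ (1 : ℕ+) :: w.drop k) (1 : ℝ)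

/-- The derivation, extended linearly to the free vector space on compositions. -/
noncomputable def der (x : List ℕ+ →₀ ℝ) : List ℕ+ →₀ ℝ :=
  x.sum fun w c => c • derWord w

lemma comps_zero : comps 0 = {[]} := by rw [comps]

lemma comps_succ (n : ℕ) :
    comps (n + 1) = (range (n + 1)).biUnion fun k => (comps k).image ((n - k).succPNat :: ·) := by
  have head_eq {k : ℕ} (hk : k < n + 1) :
      (⟨n + 1 - k, Nat.sub_pos_of_lt hk⟩ : ℕ+) = (n - k).succPNat :=
    PNat.coe_injective (by simp; omega)
  rw [comps]
  ext w
  simp only [mem_biUnion, mem_attach, mem_image, true_and, Subtype.exists, mem_range]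
  constructor
  · rintro ⟨k, hk, l, hl, rfl⟩
    exact ⟨k, hk, l, hl, by rw [head_eq hk]⟩
  · rintro ⟨k, hk, l, hl, rfl⟩
    exact ⟨k, hk, l, hl, by rw [head_eq hk]⟩

lemma comps_one : comps 1 = {[1]} := by
  simp only [comps_succ, zero_add, range_one, singleton_biUnion, comps_zero, image_singleton]
  rfl

lemma comps_three : comps 3 = {[3], [2, 1], [1, 2], [1, 1, 1]} := by
  simp only [comps_succ, comps_zero, range_add_one, range_zero, biUnion_insert, biUnion_empty]
  decide

lemma sigExp_one : sigExp 1 = Finsupp.single [1] 1 := by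
  simp [sigExp, comps_one, chi]

lemma sigExp_three : sigExp 3
    = Finsupp.single [(3 : ℕ+)] 1 + (3 : ℝ) • Finsupp.single [(2 : ℕ+), 1] 1
      + (3 : ℝ) • Finsupp.single [(1 : ℕ+), 2] 1
      + (6 : ℝ) • Finsupp.single [(1 : ℕ+), 1, 1] 1 := by
  rw [sigExp, comps_three, sum_insert (by decide), sum_insert (by decide), sum_insert (by decide),
    sum_singleton]
  simp only [show chi [3] = 1 by decide, show chi [2, 1] = 3 by decide,
    show chi [1, 2] = 3 by decide, show chi [1, 1, 1] = 6 by decide]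
  push_cast
  module

lemma poppeMul_single_single (u v : List ℕ+) (a b : ℝ) :
    poppeMul (Finsupp.single u a) (Finsupp.single v b) = (a * b) • ppWord u v := by
  simp [poppeMul]

lemma ppWord_append_singleton_cons (u v : List ℕ+) (a b : ℕ+) :
    ppWord (u ++ [a]) (b :: v) = Finsupp.single (u ++ (a + 1) :: b :: v) 1
      + Finsupp.single (u ++ a :: (b + 1) :: v) 1
      + (2 : ℝ) • Finsupp.single (u ++ a :: 1 :: b :: v) 1 := by
  simp [ppWord]

lemma poppeMul_sigExp_one_self : poppeMul (sigExp 1) (sigExp 1)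
    = Finsupp.single [(2 : ℕ+), 1] 1 + Finsupp.single [(1 : ℕ+), 2] 1
      + (2 : ℝ) • Finsupp.single [(1 : ℕ+), 1, 1] 1 := by
  rw [sigExp_one, poppeMul_single_single, one_mul, one_smul]
  exact ppWord_append_singleton_cons [] [] 1 1

/-- KdV integrability in the Pöppe algebra: `1̂ * 1̂ = 21 + 12 + 2·111`,
`3̂ = 3 + 3·21 + 3·12 + 6·111`, and consequently `3 = 3̂ - 3·(1̂ * 1̂)`. -/
theorem kdv_third_order :
    poppeMul (sigExp 1) (sigExp 1)
      = Finsupp.single [(2 : ℕ+), 1] 1 + Finsupp.single [(1 : ℕ+), 2] 1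
        + (2 : ℝ) • Finsupp.single [(1 : ℕ+), 1, 1] 1 ∧
    sigExp 3
      = Finsupp.single [(3 : ℕ+)] 1 + (3 : ℝ) • Finsupp.single [(2 : ℕ+), 1] 1
        + (3 : ℝ) • Finsupp.single [(1 : ℕ+), 2] 1
        + (6 : ℝ) • Finsupp.single [(1 : ℕ+), 1, 1] 1 ∧
    Finsupp.single [(3 : ℕ+)] (1 : ℝ)
      = sigExp 3 - (3 : ℝ) • poppeMul (sigExp 1) (sigExp 1) := by
  refine ⟨poppeMul_sigExp_one_self, sigExp_three, ?_⟩
  rw [sigExp_three, poppeMul_sigExp_one_self]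
  module
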